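/- The busy beaver / maximum shift function is not computable: there is no computable function S : ℕ → ℕ such that for every code c of size ≤ n whose evaluation on 0 halts, it halts within S n steps. -/

import Mathlib

open Nat.Partrec

namespace Nat.Partrec.Code

theorem eval_dom_of_evaln_isSome {k : ℕ} {c : Code} {a : ℕ} (h : (evaln k c a).isSome) :
    (eval c a).Dom := by
  obtain ⟨v, hv⟩ := Option.isSome_iff_exists.mp h
  exact Part.dom_iff_mem.mpr ⟨v, evaln_sound hv⟩

theorem computable_evaln_isSome {B : Code → ℕ} (hB : Computable B) (a : ℕ) :
    Computable fun c => (evaln (B c) c a).isSome :=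
  Primrec.option_isSome.to_comp.comp <|
    primrec_evaln.to_comp.comp ((hB.pair Computable.id).pair (Computable.const a))

/-- A computable bound on halting times would decide the halting problem: run for that long. -/
theorem not_exists_computable_haltingTime_bound (a : ℕ) :
    ¬ ∃ B : Code → ℕ, Computable B ∧ ∀ c, (eval c a).Dom → (evaln (B c) c a).isSome := by
  rintro ⟨B, hB, hbound⟩
  apply ComputablePred.halting_problem a
  rw [ComputablePred.computable_iff]
  refine ⟨fun c => (evaln (B c) c a).isSome, computable_evaln_isSome hB a, ?_⟩
  funext c
  exact propext ⟨hbound c, eval_dom_of_evaln_isSome⟩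

end Nat.Partrec.Code

theorem busy_beaver_shift_function_not_computable :
    ¬ ∃ S : ℕ → ℕ, Computable S ∧
      ∀ (c : Code) (n : ℕ), Code.encodeCode c ≤ n → (Code.eval c 0).Dom →
        ∃ v, Code.evaln (S n) c 0 = some v := by
  rintro ⟨S, hS, hS_bound⟩
  refine Code.not_exists_computable_haltingTime_bound 0
    ⟨fun c => S (Code.encodeCode c), hS.comp Computable.encode, fun c hc => ?_⟩
  exact Option.isSome_iff_exists.mpr (hS_bound c _ le_rfl hc)
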